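/- arXiv:math/9810092 — 2 statements merged into one kernel-verified Lean document; each statement's English description precedes it below -/
import Mathlib

section
/- Consider an abstract set W of weights in P = ℤ^{m+n} (weights of gl(m,n)) containing λ, contained in λ − Σ_i ℤ_{≥0} α_i, satisfying: for every positive odd root β and μ ∈ W, (β, μ) ≥ 0; and if (β, μ) ≠ 0 and μ + β ∉ W then μ − β ∈ W. Then for every j ≤ k with λ_k := ⟨h_k, λ⟩ > 0 (k ∈ {1,...,n−1}), the weight λ − β₀ − β₁ − ... − β_{j−1} lies in W, where β_i = α₀ + ... + α_i. -/
/-!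
Write `μ_j = λ − β₀ − ⋯ − β_{j−1}` and pass from `μ_j ∈ W` to `μ_j − β_j ∈ W` by the closure
property of `W`. Since `(β_a, β_b) = 1` for `a ≠ b`, one has
`(β_a, μ_j) = λ(1̄) + λ(a+1) − j + [a < j]`. For `a ≥ j`, `μ_j + β_a ∉ W`: the partial sum of
`λ − μ_j − β_a` over the coordinates before `a+1` is `−1`, whereas it is nonnegative on the cone
spanned by the simple roots. It remains to see `(β_j, μ_j) ≠ 0`. For `j = k − 1` this is
`(β_{k−1}, μ_j) > (β_k, μ_j) ≥ 0`, as `λ_k = λ(k) − λ(k+1) > 0`. For `j < k − 1`,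
`(β_j, μ_j) = 0` would put `μ_j − β_{k−1}` in `W`, whose pairing with `β_j` is `−1 < 0`.
-/

/-- The symmetric bilinear form on the weight lattice of `gl(m,n)`, in
coordinates indexed by the letter codes `0, …, m+n-1`:
`(ε_a, ε_a) = 1` for barred `a` (codes `< m`), `−1` for unbarred `a`. -/
def pform (m n : ℕ) (l μ : ℕ → ℤ) : ℤ :=
  ∑ x ∈ Finset.range m, l x * μ x - ∑ x ∈ Finset.range n, l (m + x) * μ (m + x)

open Finset

def oddRoot (m a b : ℕ) : ℕ → ℤ := Pi.single a 1 - Pi.single (m + b) 1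

lemma sum_range_oddRoot (m a b c : ℕ) :
    ∑ t ∈ range c, oddRoot m a b t = (if a < c then 1 else 0) - if m + b < c then 1 else 0 := by
  simp [oddRoot, sum_sub_distrib, Pi.single_apply]

lemma pform_sub_right (m n : ℕ) (l μ ν : ℕ → ℤ) :
    pform m n l (μ - ν) = pform m n l μ - pform m n l ν := by
  simp only [pform, Pi.sub_apply, mul_sub, sum_sub_distrib]
  ring

lemma pform_oddRoot {m n a b : ℕ} (ha : a < m) (hb : b < n) (μ : ℕ → ℤ) :
    pform m n (oddRoot m a b) μ = μ a + μ (m + b) := by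
  have hba : ∀ x, m + x ≠ a := fun x => by omega
  simp [pform, oddRoot, Pi.single_apply, sub_mul, sum_sub_distrib, ha, hb, hba]

lemma pform_oddRoot_oddRoot {m n a b : ℕ} (hm : 0 < m) (ha : a < n) (hab : a ≠ b) :
    pform m n (oddRoot m (m - 1) a) (oddRoot m (m - 1) b) = 1 := by
  rw [pform_oddRoot (by omega) ha]
  have h1 : m - 1 ≠ m + b := by omega
  have h2 : m + a ≠ m - 1 := by omega
  simp [oddRoot, h1, h2, hab]

/-- `μ_j = λ − β₀ − ⋯ − β_{j−1}`, where `β_i = ε_{1̄} − ε_{i+1}` is `oddRoot m (m - 1) i`: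
the barred letter `1̄` has code `m - 1` and the unbarred letter `i + 1` has code `m + i`. -/
def chainWeight (m : ℕ) (lam : ℕ → ℤ) (j : ℕ) : ℕ → ℤ :=
  lam - ∑ i ∈ range j, oddRoot m (m - 1) i

lemma chainWeight_succ (m : ℕ) (lam : ℕ → ℤ) (j : ℕ) :
    chainWeight m lam (j + 1) = chainWeight m lam j - oddRoot m (m - 1) j := by
  simp only [chainWeight, sum_range_succ, sub_add_eq_sub_sub]

lemma chainWeight_apply_bar {m : ℕ} (hm : 0 < m) (lam : ℕ → ℤ) (j : ℕ) :
    chainWeight m lam j (m - 1) = lam (m - 1) - j := by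
  have : ∀ i, m - 1 ≠ m + i := fun i => by omega
  simp [chainWeight, oddRoot, this]

lemma chainWeight_apply_unbar {m : ℕ} (hm : 0 < m) (lam : ℕ → ℤ) (j a : ℕ) :
    chainWeight m lam j (m + a) = lam (m + a) + if a < j then 1 else 0 := by
  have : m + a ≠ m - 1 := by omega
  simp [chainWeight, oddRoot, Pi.single_apply, this]

lemma pform_oddRoot_chainWeight {m n a : ℕ} (hm : 0 < m) (ha : a < n) (lam : ℕ → ℤ) (j : ℕ) :
    pform m n (oddRoot m (m - 1) a) (chainWeight m lam j) =
      lam (m - 1) + lam (m + a) - j + if a < j then 1 else 0 := by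
  rw [pform_oddRoot (by omega) ha, chainWeight_apply_bar hm, chainWeight_apply_unbar hm]
  ring

def partialSumNonneg : AddSubmonoid (ℕ → ℤ) where
  carrier := {x | ∀ c, 0 ≤ ∑ t ∈ range c, x t}
  add_mem' hx hy c := by
    simpa only [Pi.add_apply, sum_add_distrib] using add_nonneg (hx c) (hy c)
  zero_mem' c := by simp

lemma closure_simpleRoots_le_partialSumNonneg (N : ℕ) :
    AddSubmonoid.closure {x : ℕ → ℤ | ∃ c, c + 1 < N ∧ x = Pi.single c 1 - Pi.single (c + 1) 1}
      ≤ partialSumNonneg := by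
  rw [AddSubmonoid.closure_le]
  rintro _ ⟨d, -, rfl⟩ c
  simp only [Pi.sub_apply, sum_sub_distrib, sum_pi_single', mem_range]
  split_ifs <;> omega

lemma sub_chainWeight_add_oddRoot_not_mem {m : ℕ} (hm : 0 < m) (lam : ℕ → ℤ) {j a : ℕ}
    (hja : j ≤ a) : lam - (chainWeight m lam j + oddRoot m (m - 1) a) ∉ partialSumNonneg := by
  have hlt : m - 1 < m + a := by omega
  have hchain : ∀ i ∈ range j, ∑ t ∈ range (m + a), oddRoot m (m - 1) i t = 0 := by
    intro i hi
    have : m + i < m + a := by rw [mem_range] at hi; omega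
    simp [sum_range_oddRoot, hlt, this]
  have hdiff : lam - (chainWeight m lam j + oddRoot m (m - 1) a) =
      ∑ i ∈ range j, oddRoot m (m - 1) i - oddRoot m (m - 1) a := by
    simp only [chainWeight]; abel
  intro h
  have hsum := h (m + a)
  rw [hdiff] at hsum
  simp only [Pi.sub_apply, sum_sub_distrib, Finset.sum_apply] at hsum
  rw [sum_comm, sum_eq_zero hchain, sum_range_oddRoot] at hsum
  simp [hlt] at hsum

lemma chainWeight_add_oddRoot_not_mem {m : ℕ} {lam : ℕ → ℤ} {W : Set (ℕ → ℤ)} (hm : 0 < m)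
    (hQ : ∀ μ ∈ W, lam - μ ∈ partialSumNonneg) {j a : ℕ} (hja : j ≤ a) :
    chainWeight m lam j + oddRoot m (m - 1) a ∉ W :=
  fun h => sub_chainWeight_add_oddRoot_not_mem hm lam hja (hQ _ h)

lemma pform_oddRoot_chainWeight_ne_zero {m n : ℕ} {lam : ℕ → ℤ} {W : Set (ℕ → ℤ)} (hm : 0 < m)
    (hQ : ∀ μ ∈ W, lam - μ ∈ partialSumNonneg)
    (hpos : ∀ μ ∈ W, ∀ a < m, ∀ b < n, 0 ≤ pform m n (oddRoot m a b) μ)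
    (him : ∀ μ ∈ W, ∀ a < m, ∀ b < n, pform m n (oddRoot m a b) μ ≠ 0 →
      μ + oddRoot m a b ∉ W → μ - oddRoot m a b ∈ W)
    {j k : ℕ} (hμ : chainWeight m lam j ∈ W) (hjk : j < k) (hkn : k < n)
    (hlk : 0 < lam (m + (k - 1)) - lam (m + k)) :
    pform m n (oddRoot m (m - 1) j) (chainWeight m lam j) ≠ 0 := by
  have hbar : m - 1 < m := by omega
  have hβk := hpos _ hμ (m - 1) hbar k hkn
  rw [pform_oddRoot_chainWeight hm hkn, if_neg (by omega)] at hβk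
  have hβk₁ : pform m n (oddRoot m (m - 1) (k - 1)) (chainWeight m lam j) ≠ 0 := by
    rw [pform_oddRoot_chainWeight hm (by omega), if_neg (by omega)]
    omega
  rcases (by omega : j = k - 1 ∨ j < k - 1) with rfl | hlt
  · exact hβk₁
  · intro h0
    have hν := him _ hμ (m - 1) hbar (k - 1) (by omega) hβk₁
      (chainWeight_add_oddRoot_not_mem hm hQ (by omega))
    have hνj := hpos _ hν (m - 1) hbar j (by omega)
    rw [pform_sub_right, h0, pform_oddRoot_oddRoot hm (by omega) (by omega)] at hνj
    omega

theorem weight_chain_mem_general (m n : ℕ) (hm : 0 < m)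
    (lam : ℕ → ℤ) (W : Set (ℕ → ℤ)) (hlamW : lam ∈ W)
    (hQ : ∀ μ ∈ W, lam - μ ∈ AddSubmonoid.closure
        {x : ℕ → ℤ | ∃ c, c + 1 < m + n ∧ x = Pi.single c 1 - Pi.single (c + 1) 1})
    (hpos : ∀ μ ∈ W, ∀ a < m, ∀ b < n,
      0 ≤ pform m n (Pi.single a 1 - Pi.single (m + b) 1) μ)
    (him : ∀ μ ∈ W, ∀ a < m, ∀ b < n,
      pform m n (Pi.single a 1 - Pi.single (m + b) 1) μ ≠ 0 →
      μ + (Pi.single a 1 - Pi.single (m + b) 1) ∉ W →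
      μ - (Pi.single a 1 - Pi.single (m + b) 1) ∈ W) :
    ∀ k, 1 ≤ k → k ≤ n - 1 → 0 < lam (m + k - 1) - lam (m + k) →
      ∀ j ≤ k,
        lam - ∑ i ∈ Finset.range j,
            (Pi.single (m - 1) (1 : ℤ) - Pi.single (m + i) 1) ∈ W := by
  intro k hk1 hkn hlk
  have hQ' : ∀ μ ∈ W, lam - μ ∈ partialSumNonneg := fun μ hμ =>
    closure_simpleRoots_le_partialSumNonneg (m + n) (hQ μ hμ)
  rw [show m + k - 1 = m + (k - 1) by omega] at hlk
  suffices ∀ j ≤ k, chainWeight m lam j ∈ W from this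
  intro j hjk
  induction j with
  | zero => simpa [chainWeight] using hlamW
  | succ j ih =>
    have hμ := ih (by omega)
    rw [chainWeight_succ]
    exact him _ hμ (m - 1) (by omega) j (by omega)
      (pform_oddRoot_chainWeight_ne_zero hm hQ' hpos him hμ hjk (by omega) hlk)
      (chainWeight_add_oddRoot_not_mem hm hQ' le_rfl)

/-- The inductive claim in the proof of Proposition 3.5 of
Benkart–Kang–Kashiwara.  Let `W` be a set of weights containing `λ`, contained
in `λ − Σ ℤ_{≥0} α_i`, such that `(β, μ) ≥ 0` for every positive odd root
`β = ε_ā − ε_b` and every `μ ∈ W`, and with `(β, μ) ≠ 0` and `μ + β ∉ W`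
implying `μ − β ∈ W`.  If `λ_k = ⟨h_k,λ⟩ > 0` for some `k ∈ {1,…,n−1}`, then
for every `j ≤ k` the weight `λ − β₀ − β₁ − ⋯ − β_{j−1}` lies in `W`, where
`β_i = α₀ + ⋯ + α_i = ε_{1̄} − ε_{i+1}`. -/
theorem weight_chain_mem (m n : ℕ) (hm : 0 < m) (hn : 0 < n)
    (lam : ℕ → ℤ) (W : Set (ℕ → ℤ)) (hlamW : lam ∈ W)
    (hQ : ∀ μ ∈ W, lam - μ ∈ AddSubmonoid.closure
        {x : ℕ → ℤ | ∃ c, c + 1 < m + n ∧ x = Pi.single c 1 - Pi.single (c + 1) 1})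
    (hpos : ∀ μ ∈ W, ∀ a < m, ∀ b < n,
      0 ≤ pform m n (Pi.single a 1 - Pi.single (m + b) 1) μ)
    (him : ∀ μ ∈ W, ∀ a < m, ∀ b < n,
      pform m n (Pi.single a 1 - Pi.single (m + b) 1) μ ≠ 0 →
      μ + (Pi.single a 1 - Pi.single (m + b) 1) ∉ W →
      μ - (Pi.single a 1 - Pi.single (m + b) 1) ∈ W) :
    ∀ k, 1 ≤ k → k ≤ n - 1 → 0 < lam (m + k - 1) - lam (m + k) →
      ∀ j ≤ k,
        lam - ∑ i ∈ Finset.range j,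
            (Pi.single (m - 1) (1 : ℤ) - Pi.single (m + i) 1) ∈ W :=
  weight_chain_mem_general m n hm lam W hlamW hQ hpos him
end

section
/- Let Y₀ be a skew Young diagram with N boxes and let T be an (m,n)-semistandard tableau of shape Y₀ with columns T₁, ..., T_N (from left). The column bumping procedure applied to T and a letter c ∈ B (inserting c into T₁, routing the bumped letter into T₂, etc., or appending at the bottom of a column when possible) terminates and produces an (m,n)-semistandard tableau T' whose shape is obtained from Y₀ by adding exactly one box at a co-corner of Y₀. -/
/-- Row-semistandardness of a horizontal pair of letters (codes `0,…,m+n-1`,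
barred = codes `< m`). -/
def rowSS (m x y : ℕ) : Prop := x ≤ y ∧ (x = y → x < m)

/-- Column-semistandardness of a vertical pair of letters. -/
def colSS (m x y : ℕ) : Prop := x ≤ y ∧ (x = y → m ≤ x)

instance (m x y : ℕ) : Decidable (rowSS m x y) := by unfold rowSS; infer_instance
instance (m x y : ℕ) : Decidable (colSS m x y) := by unfold colSS; infer_instance
instance (m : ℕ) : DecidableRel (colSS m) := fun _ _ => inferInstance

/-- A skew tableau represented column-wise: the `j`-th entry `(o, l)` of the
list describes the `j`-th column, occupying rows `o, o+1, …, o+l.length-1`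
with entries `l` (read from the top). -/
def colAt (cols : List (ℕ × List ℕ)) (j : ℕ) : ℕ × List ℕ := cols.getD j (0, [])

/-- `(m,n)`-semistandardness of a column-wise presented skew tableau:
all columns are nonempty, column-semistandard, with entries in `B`; tops and
bottoms of consecutive columns weakly decrease from left to right (so the
shape is a skew Young diagram), and adjacent entries in the same row are
row-semistandard. -/
def IsSkewSSYT (m n : ℕ) (cols : List (ℕ × List ℕ)) : Prop :=
  (∀ c ∈ cols, c.2 ≠ []) ∧
  (∀ c ∈ cols, c.2.Chain' (colSS m)) ∧
  (∀ c ∈ cols, ∀ x ∈ c.2, x < m + n) ∧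
  (∀ j, j + 1 < cols.length →
    (colAt cols (j+1)).1 ≤ (colAt cols j).1 ∧
    (colAt cols (j+1)).1 + (colAt cols (j+1)).2.length
        ≤ (colAt cols j).1 + (colAt cols j).2.length ∧
    ∀ i, (colAt cols j).1 ≤ i →
      i < (colAt cols (j+1)).1 + (colAt cols (j+1)).2.length →
      rowSS m ((colAt cols j).2.getD (i - (colAt cols j).1) 0)
        ((colAt cols (j+1)).2.getD (i - (colAt cols (j+1)).1) 0))

/-- The set of boxes `(row, column)` of a column-wise presented tableau. -/
def cellsOf (cols : List (ℕ × List ℕ)) : Set (ℕ × ℕ) :=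
  {q | q.2 < cols.length ∧ (colAt cols q.2).1 ≤ q.1 ∧
       q.1 < (colAt cols q.2).1 + (colAt cols q.2).2.length}

/-- The column bumping procedure: insert the letter `b` into the first column;
if it can be appended at the bottom (keeping the column semistandard) the
procedure stops, otherwise `b` bumps out the entry at the smallest
row-semistandard position, and the bumped letter is inserted into the next
column; when all columns are exhausted a new one-box column is created. -/
def skewBump (m : ℕ) : ℕ → List (ℕ × List ℕ) → List (ℕ × List ℕ)
  | b, [] => [(0, [b])]
  | b, (o, l) :: rest =>
    if (l ++ [b]).IsChain (colSS m) then (o, l ++ [b]) :: rest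
    else
      (o, l.set (l.findIdx fun a => decide (rowSS m b a)) b) ::
        skewBump m (l.getD (l.findIdx fun a => decide (rowSS m b a)) 0) rest


/-! Row- and column-semistandardness of a pair are complementary (`rowSS m x y ↔ ¬ colSS m y x`),
so the entries above the insertion position `ν` are column-below the inserted letter `b`, hence
strictly smaller than the letter `b'` it bumps out; this keeps the modified column
semistandard and the rows through it semistandard. The letter bumped out of row `r` lands in
the next column weakly above row `r`, because the entry of that column in row `r` is
row-semistandard after `b'` and insertion picks the first such row. So every column keeps its
top and length except the last one touched, which grows by one box at a row no lower than the
bottom of its left neighbour: tops and bottoms stay weakly decreasing, i.e. the new box sits at a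
co-corner. -/

section Letters

variable {m x y z : ℕ}

theorem rowSS_iff_not_colSS : rowSS m x y ↔ ¬ colSS m y x := by
  unfold rowSS colSS; omega

theorem rowSS_of_lt (h : x < y) : rowSS m x y := by
  unfold rowSS; omega

theorem rowSS_trans (hxy : rowSS m x y) (hyz : rowSS m y z) : rowSS m x z := by
  unfold rowSS at *; omega

theorem lt_of_colSS_of_rowSS (hxy : colSS m x y) (hyz : rowSS m y z) : x < z := by
  unfold colSS rowSS at *; omega

theorem colSS_of_rowSS_of_colSS (hxy : rowSS m x y) (hyz : colSS m y z) : colSS m x z := by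
  unfold colSS rowSS at *; omega

instance : Trans (colSS m) (colSS m) (colSS m) where
  trans := by unfold colSS; omega

end Letters

/-- The position `ν` of the paper's insertion rule, counted from `0`. -/
def bumpIdx (m b : ℕ) (l : List ℕ) : ℕ := l.findIdx fun a => decide (rowSS m b a)

section BumpIdx

variable {m b : ℕ} {l : List ℕ}

theorem colSS_of_isChain_append (h : (l ++ [b]).IsChain (colSS m)) {a : ℕ} (ha : a ∈ l) :
    colSS m a b :=
  (List.pairwise_append.mp (List.isChain_iff_pairwise.mp h)).2.2 a ha b (List.mem_singleton_self b)

theorem bumpIdx_lt_length (hl : l.IsChain (colSS m)) (h : ¬ (l ++ [b]).IsChain (colSS m)) :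
    bumpIdx m b l < l.length := by
  refine List.findIdx_lt_length_of_exists ?_
  by_contra! hcol
  refine h (List.isChain_iff_pairwise.mpr (List.pairwise_append.mpr
    ⟨List.isChain_iff_pairwise.mp hl, List.pairwise_singleton _ b, ?_⟩))
  intro a ha b' hb'
  rw [List.mem_singleton.mp hb']
  simpa [rowSS_iff_not_colSS] using hcol a ha

theorem rowSS_getElem_bumpIdx (h : bumpIdx m b l < l.length) : rowSS m b l[bumpIdx m b l] :=
  of_decide_eq_true (List.findIdx_getElem (w := h))

theorem colSS_getElem_of_lt_bumpIdx {k : ℕ} (hk : k < bumpIdx m b l) (hkl : k < l.length) :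
    colSS m l[k] b := by
  simpa [rowSS_iff_not_colSS] using List.not_of_lt_findIdx hk

theorem isChain_set_bumpIdx (hl : l.IsChain (colSS m)) (h : bumpIdx m b l < l.length) :
    (l.set (bumpIdx m b l) b).IsChain (colSS m) := by
  rw [List.isChain_iff_getElem] at hl ⊢
  intro i hi
  simp only [List.length_set] at hi
  simp only [List.getElem_set]
  split_ifs with h1 h2 h2
  · omega
  · subst h1
    exact colSS_of_rowSS_of_colSS (rowSS_getElem_bumpIdx h) (hl _ hi)
  · exact colSS_getElem_of_lt_bumpIdx (by omega) _
  · exact hl i hi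

end BumpIdx

def colBot (c : ℕ × List ℕ) : ℕ := c.1 + c.2.length

/-- The entry in absolute row `i`; meaningful only for `c.1 ≤ i < colBot c`. -/
def colEntry (c : ℕ × List ℕ) (i : ℕ) : ℕ := c.2.getD (i - c.1) 0

def ColsFit (m : ℕ) (c d : ℕ × List ℕ) : Prop :=
  d.1 ≤ c.1 ∧ colBot d ≤ colBot c ∧
    ∀ i, c.1 ≤ i → i < colBot d → rowSS m (colEntry c i) (colEntry d i)

structure IsColInsert (m b r : ℕ) (c c' : ℕ × List ℕ) : Prop where
  top_eq : c'.1 = c.1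
  le_bot : r ≤ colBot c
  bot_eq : colBot c' = max (colBot c) (r + 1)
  entry_of_ne : ∀ i, c.1 ≤ i → i ≠ r → colEntry c' i = colEntry c i
  entry_self : colEntry c' r = b
  le_of_rowSS : ∀ i, c.1 ≤ i → i < colBot c → rowSS m b (colEntry c i) → r ≤ i

section Column

variable {m b : ℕ} {l : List ℕ}

theorem isColInsert_append (h : (l ++ [b]).IsChain (colSS m)) (o : ℕ) :
    IsColInsert m b (o + l.length) (o, l) (o, l ++ [b]) where
  top_eq := rfl
  le_bot := le_rfl
  bot_eq := by simp only [colBot, List.length_append, List.length_singleton]; omega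
  entry_of_ne i _ hi := by
    simp only [colEntry, List.getD_eq_getElem?_getD, List.getElem?_append]
    split_ifs with h'
    · rfl
    · rw [List.getElem?_eq_none (by simp; omega), List.getElem?_eq_none (by omega)]
  entry_self := by simp [colEntry]
  le_of_rowSS i hoi hi hrow := by
    simp only [colEntry, colBot] at hi hrow
    rw [List.getD_eq_getElem _ _ (by omega), rowSS_iff_not_colSS] at hrow
    exact absurd (colSS_of_isChain_append h (List.getElem_mem _)) hrow

theorem isColInsert_set_bumpIdx (h : bumpIdx m b l < l.length) (o : ℕ) :
    IsColInsert m b (o + bumpIdx m b l) (o, l) (o, l.set (bumpIdx m b l) b) where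
  top_eq := rfl
  le_bot := by simp only [colBot]; omega
  bot_eq := by simp only [colBot, List.length_set]; omega
  entry_of_ne i _ hi := by
    simp only [colEntry]
    rw [List.getD_eq_getElem?_getD, List.getD_eq_getElem?_getD, List.getElem?_set_ne (by omega)]
  entry_self := by simp [colEntry, h]
  le_of_rowSS i hoi hi hrow := by
    by_contra! hlt
    simp only [colEntry, colBot] at hi hrow
    rw [List.getD_eq_getElem _ _ (by omega), rowSS_iff_not_colSS] at hrow
    exact hrow (colSS_getElem_of_lt_bumpIdx (by omega) _)

end Column

section Bump

variable {m b o : ℕ} {l : List ℕ} {rest : List (ℕ × List ℕ)}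

theorem skewBump_cons_of_isChain (h : (l ++ [b]).IsChain (colSS m)) :
    skewBump m b ((o, l) :: rest) = (o, l ++ [b]) :: rest := by
  rw [skewBump, if_pos h]

theorem skewBump_cons_of_not_isChain (hl : l.IsChain (colSS m))
    (h : ¬ (l ++ [b]).IsChain (colSS m)) :
    skewBump m b ((o, l) :: rest) =
      (o, l.set (bumpIdx m b l) b) ::
        skewBump m (l[bumpIdx m b l]'(bumpIdx_lt_length hl h)) rest := by
  rw [skewBump, if_neg h, ← List.getD_eq_getElem _ 0]
  rfl

end Bump

theorem exists_isColInsert_skewBump {m : ℕ} (b : ℕ) (cols : List (ℕ × List ℕ))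
    (h : (colAt cols 0).2.IsChain (colSS m)) :
    ∃ r, IsColInsert m b r (colAt cols 0) (colAt (skewBump m b cols) 0) := by
  rcases cols with _ | ⟨⟨o, l⟩, rest⟩
  · exact ⟨_, isColInsert_append (l := []) (List.isChain_singleton b) 0⟩
  · by_cases hap : (l ++ [b]).IsChain (colSS m)
    · rw [skewBump_cons_of_isChain hap]
      exact ⟨_, isColInsert_append hap o⟩
    · rw [skewBump_cons_of_not_isChain (l := l) h hap]
      exact ⟨_, isColInsert_set_bumpIdx (bumpIdx_lt_length h hap) o⟩

section Fit

variable {m b r : ℕ} {c d d' : ℕ × List ℕ}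

theorem IsColInsert.le_of_colsFit {i : ℕ} (hd : IsColInsert m (colEntry c i) r d d')
    (hfit : ColsFit m c d) (hi : c.1 ≤ i) : r ≤ i := by
  rcases lt_or_ge i (colBot d) with hid | hid
  · exact hd.le_of_rowSS i (hfit.1.trans hi) hid (hfit.2.2 i hi hid)
  · exact hd.le_bot.trans hid

theorem ColsFit.append {o : ℕ} {l : List ℕ} (hfit : ColsFit m (o, l) d) (b : ℕ) :
    ColsFit m (o, l ++ [b]) d := by
  obtain ⟨htop, hbot, hrow⟩ := hfit
  refine ⟨htop, by simp only [colBot, List.length_append] at hbot ⊢; omega, fun i hoi hid => ?_⟩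
  have hil : i - o < l.length := by simp only [colBot] at hbot hid; omega
  simpa only [colEntry, List.getD_append _ _ _ _ hil] using hrow i hoi hid

theorem ColsFit.set_bumpIdx {o : ℕ} {l : List ℕ} (hfit : ColsFit m (o, l) d)
    (hν : bumpIdx m b l < l.length) (hd : IsColInsert m l[bumpIdx m b l] r d d') :
    ColsFit m (o, l.set (bumpIdx m b l) b) d' := by
  have hc := isColInsert_set_bumpIdx hν o
  set ν := bumpIdx m b l
  have hbump : colEntry (o, l) (o + ν) = l[ν] := by
    simp [colEntry, hν]
  have hr : r ≤ o + ν := (hbump ▸ hd).le_of_colsFit hfit (Nat.le_add_right o ν)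
  obtain ⟨htop, hbot, hrow⟩ := hfit
  have hcbot : colBot (o, l) = o + l.length := rfl
  have hd'bot := hd.bot_eq
  have hc'bot := hc.bot_eq
  refine ⟨hd.top_eq ▸ htop, by omega, fun i hoi hid => ?_⟩
  rcases eq_or_ne i r with rfl | hir
  · rw [hd.entry_self]
    rcases eq_or_lt_of_le hr with rfl | hlt
    · rw [hc.entry_self]; exact rowSS_getElem_bumpIdx hν
    · rw [hc.entry_of_ne i hoi hlt.ne]
      simp only [colEntry]
      rw [List.getD_eq_getElem _ _ (by omega)]
      exact rowSS_of_lt (lt_of_colSS_of_rowSS (colSS_getElem_of_lt_bumpIdx (by omega) _)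
        (rowSS_getElem_bumpIdx hν))
  · have hid' : i < colBot d := by have := hd.le_bot; omega
    rw [hd.entry_of_ne i (htop.trans hoi) hir]
    rcases eq_or_ne i (o + ν) with rfl | hiν
    · rw [hc.entry_self]
      exact rowSS_trans (rowSS_getElem_bumpIdx hν) (hbump ▸ hrow _ hoi hid')
    · rw [hc.entry_of_ne i hoi hiν]
      exact hrow i hoi hid'

end Fit

theorem colAt_eq_getElem {cols : List (ℕ × List ℕ)} {j : ℕ} (h : j < cols.length) :
    colAt cols j = cols[j] :=
  List.getD_eq_getElem _ _ h

section Tableau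

variable {m n : ℕ}

theorem isSkewSSYT_nil : IsSkewSSYT m n [] :=
  ⟨nofun, nofun, nofun, fun _ h => absurd h (Nat.not_lt_zero _)⟩

theorem colsFit_colAt_nil (c : ℕ × List ℕ) : ColsFit m c (colAt [] 0) :=
  ⟨Nat.zero_le _, Nat.zero_le _, fun i _ hi => absurd hi (Nat.not_lt_zero i)⟩

theorem isSkewSSYT_cons_iff {c : ℕ × List ℕ} {cs : List (ℕ × List ℕ)} :
    IsSkewSSYT m n (c :: cs) ↔ c.2 ≠ [] ∧ c.2.IsChain (colSS m) ∧ (∀ x ∈ c.2, x < m + n) ∧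
      ColsFit m c (colAt cs 0) ∧ IsSkewSSYT m n cs := by
  simp only [IsSkewSSYT, List.forall_mem_cons, List.length_cons]
  constructor
  · rintro ⟨⟨h1, t1⟩, ⟨h2, t2⟩, ⟨h3, t3⟩, t4⟩
    refine ⟨h1, h2, h3, ?_, t1, t2, t3, fun j hj => t4 (j + 1) (by omega)⟩
    rcases cs with _ | _
    · exact colsFit_colAt_nil c
    · exact t4 0 (by simp)
  · rintro ⟨h1, h2, h3, hfit, t1, t2, t3, t4⟩
    refine ⟨⟨h1, t1⟩, ⟨h2, t2⟩, ⟨h3, t3⟩, fun j hj => ?_⟩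
    rcases j with _ | j
    · exact hfit
    · exact t4 j (by omega)

theorem IsSkewSSYT.isChain_colAt {cols : List (ℕ × List ℕ)} (h : IsSkewSSYT m n cols) (j : ℕ) :
    (colAt cols j).2.IsChain (colSS m) := by
  rcases lt_or_ge j cols.length with hj | hj
  · rw [colAt_eq_getElem hj]
    exact h.2.1 _ (List.getElem_mem hj)
  · rw [colAt, List.getD_eq_default _ _ hj]
    exact List.isChain_nil

theorem isSkewSSYT_skewBump {cols : List (ℕ × List ℕ)} {b : ℕ} (hT : IsSkewSSYT m n cols)
    (hb : b < m + n) : IsSkewSSYT m n (skewBump m b cols) := by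
  induction cols generalizing b with
  | nil =>
    refine isSkewSSYT_cons_iff.mpr ⟨List.cons_ne_nil b [], List.isChain_singleton b, ?_,
      colsFit_colAt_nil _, isSkewSSYT_nil⟩
    simpa using hb
  | cons c rest ih =>
    obtain ⟨o, l⟩ := c
    obtain ⟨hne, hl, hlt, hfit, hrest⟩ := isSkewSSYT_cons_iff.mp hT
    by_cases hap : (l ++ [b]).IsChain (colSS m)
    · rw [skewBump_cons_of_isChain hap]
      refine isSkewSSYT_cons_iff.mpr ⟨by simp, hap, ?_, hfit.append b, hrest⟩
      simpa [or_imp, forall_and] using ⟨hlt, hb⟩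
    · rw [skewBump_cons_of_not_isChain hl hap]
      have hν := bumpIdx_lt_length hl hap
      obtain ⟨r, hr⟩ := exists_isColInsert_skewBump l[bumpIdx m b l] rest (hrest.isChain_colAt 0)
      refine isSkewSSYT_cons_iff.mpr ⟨by simpa using hne, isChain_set_bumpIdx hl hν, ?_,
        ?_, ?_⟩
      · intro x hx
        rcases List.mem_or_eq_of_mem_set hx with hx | rfl
        · exact hlt x hx
        · exact hb
      · exact hfit.set_bumpIdx hν hr
      · exact ih hrest (hlt _ (List.getElem_mem hν))

end Tableau

section Cells

variable {c c' : ℕ × List ℕ} {cs cs' : List (ℕ × List ℕ)} {i j : ℕ}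

theorem mk_zero_mem_cellsOf_cons : (i, 0) ∈ cellsOf (c :: cs) ↔ c.1 ≤ i ∧ i < colBot c := by
  simp [cellsOf, colAt, colBot]

theorem mk_succ_mem_cellsOf_cons : (i, j + 1) ∈ cellsOf (c :: cs) ↔ (i, j) ∈ cellsOf cs := by
  simp [cellsOf, colAt]

theorem cellsOf_cons_append (o b : ℕ) (l : List ℕ) (cs : List (ℕ × List ℕ)) :
    cellsOf ((o, l ++ [b]) :: cs) = insert (o + l.length, 0) (cellsOf ((o, l) :: cs)) := by
  ext ⟨i, _ | j⟩
  · simp only [Set.mem_insert_iff, mk_zero_mem_cellsOf_cons, colBot, List.length_append,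
      List.length_singleton, Prod.mk.injEq, and_true]
    omega
  · simp [mk_succ_mem_cellsOf_cons]

theorem cellsOf_cons_of_cellsOf_eq_insert (htop : c'.1 = c.1)
    (hlen : c'.2.length = c.2.length) {q : ℕ × ℕ} (h : cellsOf cs' = insert q (cellsOf cs)) :
    cellsOf (c' :: cs') = insert (q.1, q.2 + 1) (cellsOf (c :: cs)) := by
  ext ⟨i, _ | j⟩
  · simp [mk_zero_mem_cellsOf_cons, colBot, htop, hlen]
  · simp [mk_succ_mem_cellsOf_cons, h, Prod.ext_iff]

end Cells

theorem exists_cellsOf_skewBump_eq_insert (m b : ℕ) (cols : List (ℕ × List ℕ)) :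
    ∃ q ∉ cellsOf cols, cellsOf (skewBump m b cols) = insert q (cellsOf cols) := by
  induction cols generalizing b with
  | nil =>
    refine ⟨(0, 0), fun h => absurd h.1 (Nat.not_lt_zero 0), ?_⟩
    ext ⟨i, _ | j⟩ <;> simp [skewBump, cellsOf, colAt]
  | cons c rest ih =>
    obtain ⟨o, l⟩ := c
    by_cases hap : (l ++ [b]).IsChain (colSS m)
    · rw [skewBump_cons_of_isChain hap, cellsOf_cons_append]
      refine ⟨_, ?_, rfl⟩
      rw [mk_zero_mem_cellsOf_cons]
      simp [colBot]
    · rw [skewBump, if_neg hap]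
      obtain ⟨q, hq, hcells⟩ := ih (l.getD (bumpIdx m b l) 0)
      refine ⟨(q.1, q.2 + 1), by rwa [mk_succ_mem_cellsOf_cons], ?_⟩
      exact cellsOf_cons_of_cellsOf_eq_insert (c := (o, l)) (c' := (o, l.set (bumpIdx m b l) b))
        rfl List.length_set hcells

theorem exists_youngDiagram_cellsOf_eq_diff {S : List (ℕ × List ℕ)}
    (htop : (S.map Prod.fst).SortedGE) (hbot : (S.map colBot).SortedGE) :
    ∃ outer inner : YoungDiagram, inner.cells ⊆ outer.cells ∧
      cellsOf S = (↑outer.cells : Set (ℕ × ℕ)) \ ↑inner.cells := by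
  refine ⟨(YoungDiagram.ofRowLens _ hbot).transpose, (YoungDiagram.ofRowLens _ htop).transpose,
    fun q hq => ?_, ?_⟩
  · rw [YoungDiagram.mem_cells, YoungDiagram.mem_transpose, YoungDiagram.mem_ofRowLens] at hq ⊢
    obtain ⟨hj, hi⟩ := hq
    simp only [List.length_map, List.getElem_map, Prod.fst_swap, Prod.snd_swap, colBot] at hj hi ⊢
    exact ⟨hj, by omega⟩
  · ext ⟨i, j⟩
    simp only [cellsOf, colAt, Set.mem_ofPred_eq, Set.mem_sdiff, Finset.mem_coe,
      YoungDiagram.mem_cells, YoungDiagram.mem_transpose, YoungDiagram.mem_ofRowLens,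
      Prod.swap_prod_mk, List.length_map, List.getElem_map, colBot]
    constructor
    · rintro ⟨hj, hi1, hi2⟩
      rw [List.getD_eq_getElem _ _ hj] at hi1 hi2
      exact ⟨⟨hj, hi2⟩, fun ⟨_, h⟩ => by omega⟩
    · rintro ⟨⟨hj, hi⟩, hni⟩
      rw [List.getD_eq_getElem _ _ hj]
      exact ⟨hj, by simpa [hj] using hni, hi⟩

theorem IsSkewSSYT.sortedGE_map_fst {m n : ℕ} {S : List (ℕ × List ℕ)} (h : IsSkewSSYT m n S) :
    (S.map Prod.fst).SortedGE := by
  rw [List.sortedGE_iff_isChain, List.isChain_iff_getElem]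
  intro j hj
  simp only [List.length_map] at hj
  simpa only [List.getElem_map, colAt_eq_getElem hj, colAt_eq_getElem (Nat.lt_of_succ_lt hj)]
    using (h.2.2.2 j hj).1

theorem IsSkewSSYT.sortedGE_map_colBot {m n : ℕ} {S : List (ℕ × List ℕ)}
    (h : IsSkewSSYT m n S) : (S.map colBot).SortedGE := by
  rw [List.sortedGE_iff_isChain, List.isChain_iff_getElem]
  intro j hj
  simp only [List.length_map] at hj
  simpa only [List.getElem_map, colAt_eq_getElem hj, colAt_eq_getElem (Nat.lt_of_succ_lt hj),
    colBot] using (h.2.2.2 j hj).2.1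

/-- Theorem (column bumping): for an `(m,n)`-semistandard skew tableau `T` of
shape `Y₀` and a letter `c ∈ B`, the bumping procedure terminates and yields
an `(m,n)`-semistandard tableau whose shape is obtained from `Y₀` by adding
exactly one box, at a co-corner of `Y₀` (i.e. the enlarged shape is again a
skew Young diagram `outer \ inner`). -/
theorem skewBump_spec (m n : ℕ) (cols : List (ℕ × List ℕ)) (c : ℕ)
    (hT : IsSkewSSYT m n cols) (hc : c < m + n) :
    IsSkewSSYT m n (skewBump m c cols) ∧
    ∃ q : ℕ × ℕ, q ∉ cellsOf cols ∧
      cellsOf (skewBump m c cols) = insert q (cellsOf cols) ∧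
      ∃ outer inner : YoungDiagram, inner.cells ⊆ outer.cells ∧
        insert q (cellsOf cols) = (↑outer.cells : Set (ℕ × ℕ)) \ ↑inner.cells := by
  have hT' := isSkewSSYT_skewBump hT hc
  obtain ⟨q, hq, hcells⟩ := exists_cellsOf_skewBump_eq_insert m c cols
  refine ⟨hT', q, hq, hcells, ?_⟩
  rw [← hcells]
  exact exists_youngDiagram_cellsOf_eq_diff hT'.sortedGE_map_fst hT'.sortedGE_map_colBot
end
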